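/- arXiv:math/9906043 — 7 statements merged into one kernel-verified Lean document; each statement's English description precedes it below -/
import Mathlib

section
/- Suppose λEv = Av, v = ℰα + z with ℱ†Ez = 0, and the matrix λE − A + [A,Q]₊ is invertible where Q = Eℰℱ†E and P = Iₘ − Q. Then λα = (A_rr + H(λ))α, where A_rr = ℱ†Aℰ and H(λ) = ℱ†AP(λE − A + [A,Q]₊)⁻¹PAℰ. -/
open Matrix

/-- Reduced eigenproblem: λα = (A_rr + H(λ))α. -/
theorem stmt_5 (m n : ℕ) (E A : Matrix (Fin m) (Fin m) ℂ)
    (hEsym : Eᴴ = E) (hEidem : E * E = E)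
    (ℰ ℱ : Matrix (Fin m) (Fin n) ℂ)
    (hnorm : ℱᴴ * E * ℰ = 1)
    (lam : ℂ) (v : Matrix (Fin m) (Fin 1) ℂ)
    (heig : lam • (E * v) = A * v)
    (α : Matrix (Fin n) (Fin 1) ℂ) (z : Matrix (Fin m) (Fin 1) ℂ)
    (hv : v = ℰ * α + z) (hz : ℱᴴ * E * z = 0)
    (Q P : Matrix (Fin m) (Fin m) ℂ)
    (hQ : Q = E * ℰ * ℱᴴ * E) (hP : P = 1 - Q)
    (hinv : IsUnit (lam • E - A + (A * Q + Q * A))) :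
    lam • α =
      (ℱᴴ * A * ℰ +
        ℱᴴ * A * P * (lam • E - A + (A * Q + Q * A))⁻¹ * P * A * ℰ) * α := by
  have hz' : ℱᴴ * (E * z) = 0 := by rw [← Matrix.mul_assoc]; exact hz
  have hn' : ℱᴴ * (E * ℰ) = 1 := by rw [← Matrix.mul_assoc]; exact hnorm
  have hEEz : E * (E * z) = E * z := by rw [← Matrix.mul_assoc, hEidem]
  have hEEℰα : E * (E * (ℰ * α)) = E * (ℰ * α) := by
    rw [← Matrix.mul_assoc, hEidem]
  have hFEℰα : ℱᴴ * (E * (ℰ * α)) = α := by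
    rw [← Matrix.mul_assoc E ℰ α, ← Matrix.mul_assoc, hn', Matrix.one_mul]
  have hQz : Q * z = 0 := by
    simp only [hQ, Matrix.mul_assoc, hz', Matrix.mul_zero]
  have hQEz : Q * (E * z) = 0 := by
    simp only [hQ, Matrix.mul_assoc, hEEz, hz', Matrix.mul_zero]
  have hQEℰα : Q * (E * (ℰ * α)) = E * (ℰ * α) := by
    simp only [hQ, Matrix.mul_assoc, hEEℰα, hFEℰα]
  have heig' : lam • (E * (ℰ * α)) + lam • (E * z) = A * (ℰ * α) + A * z := by
    have h := heig
    rw [hv, Matrix.mul_add, Matrix.mul_add, smul_add] at h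
    exact h
  have hQAz : Q * (A * z) = lam • (E * (ℰ * α)) - Q * (A * (ℰ * α)) := by
    have h := congrArg (fun X => Q * X) heig'.symm
    simp only [Matrix.mul_add, Matrix.mul_smul, hQEz, hQEℰα, smul_zero,
      add_zero] at h
    linear_combination (norm := module) h
  have hBz : (lam • E - A + (A * Q + Q * A)) * z = P * (A * (ℰ * α)) := by
    have hlhs : (lam • E - A + (A * Q + Q * A)) * z
        = lam • (E * z) - A * z + (A * (Q * z) + Q * (A * z)) := by
      simp only [Matrix.add_mul, Matrix.sub_mul, Matrix.smul_mul,
        Matrix.mul_assoc]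
    rw [hlhs, hQz, Matrix.mul_zero, zero_add, hQAz, hP, Matrix.sub_mul,
      Matrix.one_mul]
    have h2 : lam • (E * z) - A * z = A * (ℰ * α) - lam • (E * (ℰ * α)) := by
      linear_combination (norm := module) heig'
    rw [h2]
    module
  have hzB : (lam • E - A + (A * Q + Q * A))⁻¹ * (P * (A * (ℰ * α))) = z := by
    rw [← hBz, ← Matrix.mul_assoc,
      Matrix.nonsing_inv_mul _ ((Matrix.isUnit_iff_isUnit_det _).mp hinv),
      Matrix.one_mul]
  have hPz : P * z = z := by
    rw [hP, Matrix.sub_mul, Matrix.one_mul, hQz, sub_zero]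
  calc lam • α
      = lam • (ℱᴴ * (E * (ℰ * α))) + lam • (ℱᴴ * (E * z)) := by
        rw [hFEℰα, hz', smul_zero, add_zero]
    _ = ℱᴴ * (lam • (E * (ℰ * α)) + lam • (E * z)) := by
        rw [Matrix.mul_add, Matrix.mul_smul, Matrix.mul_smul]
    _ = ℱᴴ * (A * (ℰ * α)) + ℱᴴ * (A * z) := by rw [heig', Matrix.mul_add]
    _ = (ℱᴴ * A * ℰ +
        ℱᴴ * A * P * (lam • E - A + (A * Q + Q * A))⁻¹ * P * A * ℰ) * α := by
        rw [Matrix.add_mul]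
        simp only [Matrix.mul_assoc, hzB, hPz]
end

section
/- The matrix A_rr + H(λ) = ℱ†Aℰ + ℱ†AP(λE − A + QA)⁻¹PAℰ is invariant under the transformation ℰ ↦ ℰ + (Iₘ − E)L for any m×n matrix L, assuming λE − A + QA is invertible. -/
open Matrix

/-- A_rr + H(λ) is invariant under ℰ ↦ ℰ + (I − E)L. -/
theorem stmt_8 (m n : ℕ) (E A : Matrix (Fin m) (Fin m) ℂ)
    (hEsym : Eᴴ = E) (hEidem : E * E = E)
    (ℰ ℱ : Matrix (Fin m) (Fin n) ℂ)
    (hnorm : ℱᴴ * E * ℰ = 1)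
    (Q P : Matrix (Fin m) (Fin m) ℂ)
    (hQ : Q = E * ℰ * ℱᴴ * E) (hP : P = 1 - Q)
    (lam : ℂ)
    (hinv : IsUnit (lam • E - A + Q * A))
    (L : Matrix (Fin m) (Fin n) ℂ) :
    ℱᴴ * A * (ℰ + (1 - E) * L) +
        ℱᴴ * A * P * (lam • E - A + Q * A)⁻¹ * P * A * (ℰ + (1 - E) * L) =
      ℱᴴ * A * ℰ + ℱᴴ * A * P * (lam • E - A + Q * A)⁻¹ * P * A * ℰ := by
  set M := lam • E - A + Q * A with hM
  have hdet : IsUnit M.det := (Matrix.isUnit_iff_isUnit_det _).mp hinv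
  have hMinv : M⁻¹ * M = 1 := Matrix.nonsing_inv_mul _ hdet
  have hE1 : E * (1 - E) = 0 := by rw [mul_sub, hEidem, mul_one, sub_self]
  have hQ1 : Q * (1 - E) = 0 := by rw [hQ, mul_assoc, hE1, mul_zero]
  have hP1 : P * (1 - E) = 1 - E := by rw [hP, sub_mul, one_mul, hQ1, sub_zero]
  have hME : M * (1 - E) = -(P * (A * (1 - E))) := by
    have h2 : M * (1 - E) = lam • (E * (1 - E)) - A * (1 - E) + Q * (A * (1 - E)) := by
      rw [hM]
      simp only [sub_mul, add_mul, smul_mul_assoc, mul_assoc]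
    rw [h2, hE1, smul_zero, zero_sub, hP, sub_mul, one_mul]
    abel
  have hMi : M⁻¹ * (P * (A * (1 - E))) = -(1 - E) := by
    rw [← neg_neg (P * (A * (1 - E))), ← hME, mul_neg, ← mul_assoc, hMinv, one_mul]
  have hzero : ℱᴴ * A * ((1 - E) * L) + ℱᴴ * A * P * M⁻¹ * P * A * ((1 - E) * L) = 0 := by
    have h1 : ℱᴴ * A * P * M⁻¹ * P * A * ((1 - E) * L) = -(ℱᴴ * A * ((1 - E) * L)) := by
      have : ℱᴴ * A * P * M⁻¹ * P * A * ((1 - E) * L)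
          = ℱᴴ * (A * (P * (M⁻¹ * (P * (A * (1 - E)))) * L)) := by
        simp only [Matrix.mul_assoc]
      rw [this, hMi]
      simp only [hP1, Matrix.neg_mul, Matrix.mul_neg, Matrix.mul_assoc]
    rw [h1, add_neg_cancel]
  simp only [Matrix.mul_add]
  rw [add_add_add_comm, hzero, add_zero]
end

section
/- The matrix A_rr + H(λ) is invariant under the transformation ℱ ↦ ℱ + (Iₘ − E)M for any m×n matrix M, assuming λE − A + AQ is invertible. -/
open Matrix

/-- A_rr + H(λ) is invariant under ℱ ↦ ℱ + (I − E)M. -/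
theorem stmt_9 (m n : ℕ) (E A : Matrix (Fin m) (Fin m) ℂ)
    (hEsym : Eᴴ = E) (hEidem : E * E = E)
    (ℰ ℱ : Matrix (Fin m) (Fin n) ℂ)
    (hnorm : ℱᴴ * E * ℰ = 1)
    (Q P : Matrix (Fin m) (Fin m) ℂ)
    (hQ : Q = E * ℰ * ℱᴴ * E) (hP : P = 1 - Q)
    (lam : ℂ)
    (hinv : IsUnit (lam • E - A + A * Q))
    (M : Matrix (Fin m) (Fin n) ℂ) :
    (ℱ + (1 - E) * M)ᴴ * A * ℰ +
        (ℱ + (1 - E) * M)ᴴ * A * P * (lam • E - A + A * Q)⁻¹ * P * A * ℰ =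
      ℱᴴ * A * ℰ + ℱᴴ * A * P * (lam • E - A + A * Q)⁻¹ * P * A * ℰ := by
  set S : Matrix (Fin m) (Fin m) ℂ := lam • E - A + A * Q with hS
  have hSinv : S * S⁻¹ = 1 := mul_nonsing_inv S ((isUnit_iff_isUnit_det S).mp hinv)
  -- (1 - E) * E = 0
  have hE0 : (1 - E) * E = 0 := by
    rw [sub_mul, one_mul, hEidem, sub_self]
  -- E * Q = Q, hence (1 - E) * Q = 0 and (1 - E) * P = 1 - E
  have hEQ : (1 - E) * Q = 0 := by
    rw [hQ]
    have : E * (E * ℰ * ℱᴴ * E) = E * ℰ * ℱᴴ * E := by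
      rw [show E * (E * ℰ * ℱᴴ * E) = (E * E) * ℰ * ℱᴴ * E by
        simp only [Matrix.mul_assoc], hEidem]
    rw [sub_mul, one_mul, this, sub_self]
  have hEP : (1 - E) * P = 1 - E := by
    rw [hP, mul_sub, mul_one, hEQ, sub_zero]
  -- (1 - E) * (A * P) = -((1 - E) * S)
  have hAP : (1 - E) * (A * P) = -((1 - E) * S) := by
    have h1 : A * P = lam • E - S := by
      rw [hP, hS]; noncomm_ring
    rw [h1, mul_sub, Matrix.mul_smul, hE0, smul_zero, zero_sub]
  -- key : (1 - E) * (A * P * S⁻¹ * P) = -(1 - E)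
  have key : (1 - E) * (A * P * S⁻¹ * P) = -(1 - E) := by
    have h2 : (1 - E) * (A * P * S⁻¹) = -(1 - E) := by
      calc (1 - E) * (A * P * S⁻¹) = ((1 - E) * (A * P)) * S⁻¹ := by
              simp only [Matrix.mul_assoc]
        _ = -((1 - E) * (S * S⁻¹)) := by rw [hAP, Matrix.neg_mul, Matrix.mul_assoc]
        _ = -(1 - E) := by rw [hSinv, mul_one]
    calc (1 - E) * (A * P * S⁻¹ * P) = ((1 - E) * (A * P * S⁻¹)) * P := by
            simp only [Matrix.mul_assoc]
      _ = -((1 - E) * P) := by rw [h2, Matrix.neg_mul]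
      _ = -(1 - E) := by rw [hEP]
  -- expand the conjugate transpose
  have hT : (ℱ + (1 - E) * M)ᴴ = ℱᴴ + Mᴴ * (1 - E) := by
    rw [conjTranspose_add, conjTranspose_mul, conjTranspose_sub, conjTranspose_one, hEsym]
  rw [hT]
  have hextra : Mᴴ * (1 - E) * A * ℰ +
      Mᴴ * (1 - E) * A * P * S⁻¹ * P * A * ℰ = 0 := by
    have h3 : Mᴴ * (1 - E) * A * P * S⁻¹ * P = -(Mᴴ * (1 - E)) := by
      calc Mᴴ * (1 - E) * A * P * S⁻¹ * P
          = Mᴴ * ((1 - E) * (A * P * S⁻¹ * P)) := by simp only [Matrix.mul_assoc]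
        _ = Mᴴ * (-(1 - E)) := by rw [key]
        _ = -(Mᴴ * (1 - E)) := by rw [Matrix.mul_neg]
    rw [h3, Matrix.neg_mul, Matrix.neg_mul, add_neg_cancel]
  calc (ℱᴴ + Mᴴ * (1 - E)) * A * ℰ +
        (ℱᴴ + Mᴴ * (1 - E)) * A * P * S⁻¹ * P * A * ℰ
      = (ℱᴴ * A * ℰ + ℱᴴ * A * P * S⁻¹ * P * A * ℰ) +
        (Mᴴ * (1 - E) * A * ℰ + Mᴴ * (1 - E) * A * P * S⁻¹ * P * A * ℰ) := by
        simp only [Matrix.add_mul]; abel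
    _ = ℱᴴ * A * ℰ + ℱᴴ * A * P * S⁻¹ * P * A * ℰ := by rw [hextra, add_zero]
end

section
/- Suppose the SMA iteration equations hold: ʲλ ʲα = (A_rr + H(ʲ⁻¹λ)) ʲα, ʲz = P N(ʲ⁻¹λ) P A ℰ ʲα, with ʲv = ℰ ʲα + ʲz, where N(μ) = (μE − A + [A,Q]₊)⁻¹. Then [A − ʲ⁻¹λ(E − Q)] ʲv = ʲλ Q ʲv. -/
open Matrix

/-- The SMA iterates satisfy [A − μ(E − Q)]v = λ Q v. -/
theorem stmt_14 (m n : ℕ) (E A : Matrix (Fin m) (Fin m) ℂ)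
    (hEsym : Eᴴ = E) (hEidem : E * E = E)
    (ℰ ℱ : Matrix (Fin m) (Fin n) ℂ)
    (hnorm : ℱᴴ * E * ℰ = 1)
    (Q P : Matrix (Fin m) (Fin m) ℂ)
    (hQ : Q = E * ℰ * ℱᴴ * E) (hP : P = 1 - Q)
    (μ lam : ℂ)
    (hinvN : IsUnit (μ • E - A + (A * Q + Q * A)))
    (α : Matrix (Fin n) (Fin 1) ℂ) (z v : Matrix (Fin m) (Fin 1) ℂ)
    (heig : lam • α =
      (ℱᴴ * A * ℰ +
        ℱᴴ * A * P * (μ • E - A + (A * Q + Q * A))⁻¹ * P * A * ℰ) * α)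
    (hz : z = P * (μ • E - A + (A * Q + Q * A))⁻¹ * P * A * ℰ * α)
    (hv : v = ℰ * α + z) :
    (A - μ • (E - Q)) * v = lam • (Q * v) := by
  set M : Matrix (Fin m) (Fin m) ℂ := μ • E - A + (A * Q + Q * A) with hM
  set N : Matrix (Fin m) (Fin m) ℂ := M⁻¹ with hN
  have hdet : IsUnit M.det := (Matrix.isUnit_iff_isUnit_det M).mp hinvN
  have hMN : M * N = 1 := by rw [hN]; exact Matrix.mul_nonsing_inv M hdet
  have hNM : N * M = 1 := by rw [hN]; exact Matrix.nonsing_inv_mul M hdet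
  -- basic identities for Q
  have hEQ : E * Q = Q := by
    rw [hQ]; simp only [← Matrix.mul_assoc]; rw [hEidem]
  have hQE : Q * E = Q := by
    rw [hQ]; simp only [Matrix.mul_assoc]; rw [hEidem]
  have hQℰ : Q * ℰ = E * ℰ := by
    rw [hQ, Matrix.mul_assoc (E * ℰ) ℱᴴ E, Matrix.mul_assoc (E * ℰ) (ℱᴴ * E) ℰ,
      hnorm, Matrix.mul_one]
  have hQQ : Q * Q = Q := by
    nth_rewrite 2 [hQ]
    simp only [← Matrix.mul_assoc]
    rw [hQE, hQℰ, ← hQ]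
  have hQP : Q * P = 0 := by
    rw [hP, Matrix.mul_sub, Matrix.mul_one, hQQ, sub_self]
  have hPP : P * P = P := by
    rw [hP, Matrix.sub_mul, Matrix.one_mul, Matrix.mul_sub, Matrix.mul_one, hQQ,
      sub_self, sub_zero]
  have hQQA : Q * (Q * A) = Q * A := by rw [← Matrix.mul_assoc, hQQ]
  -- Q commutes with M, hence with N and P commutes with N
  have hQM : Q * M = M * Q := by
    rw [hM]
    simp only [Matrix.mul_add, Matrix.add_mul, Matrix.mul_sub, Matrix.sub_mul,
      Matrix.mul_smul, Matrix.smul_mul, hQE, hEQ]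
    rw [hQQA, Matrix.mul_assoc A Q Q, hQQ]
    simp only [Matrix.mul_assoc]
    abel
  have hNQ : N * Q = Q * N := by
    calc N * Q = N * Q * (M * N) := by rw [hMN, Matrix.mul_one]
      _ = N * (Q * M) * N := by simp only [Matrix.mul_assoc]
      _ = N * (M * Q) * N := by rw [hQM]
      _ = N * M * (Q * N) := by simp only [Matrix.mul_assoc]
      _ = Q * N := by rw [hNM, Matrix.one_mul]
  have hNP : N * P = P * N := by
    rw [hP, Matrix.mul_sub, Matrix.sub_mul, Matrix.mul_one, Matrix.one_mul, hNQ]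
  have hPNP : P * N * P = N * P := by
    rw [Matrix.mul_assoc, hNP, ← Matrix.mul_assoc, hPP]
  -- facts about z
  have hz2 : z = N * P * (A * ℰ * α) := by
    rw [hz, hPNP]; simp only [Matrix.mul_assoc]
  have hQz : Q * z = 0 := by
    rw [hz2]
    simp only [← Matrix.mul_assoc]
    rw [← hNQ, Matrix.mul_assoc N Q P, hQP, Matrix.mul_zero, Matrix.zero_mul,
      Matrix.zero_mul, Matrix.zero_mul]
  have hMz : M * z = P * (A * ℰ * α) := by
    rw [hz2]
    simp only [← Matrix.mul_assoc]
    rw [hMN, Matrix.one_mul]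
  -- the key linear relation
  have hQℰα : Q * (ℰ * α) = E * (ℰ * α) := by
    rw [← Matrix.mul_assoc, hQℰ, Matrix.mul_assoc]
  have hAz : A * z = μ • (E * z) + Q * (A * z) + Q * (A * (ℰ * α)) - A * (ℰ * α) := by
    have h2 := hMz
    rw [hM] at h2
    simp only [Matrix.add_mul, Matrix.sub_mul, Matrix.smul_mul, Matrix.mul_assoc] at h2
    rw [hQz, Matrix.mul_zero, zero_add] at h2
    rw [hP, Matrix.sub_mul, Matrix.one_mul] at h2
    -- h2 : μ • (E * z) - A * z + Q * (A * z) = A * (ℰ * α) - Q * (A * (ℰ * α))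
    have key : (A * z - (μ • (E * z) + Q * (A * z) + Q * (A * (ℰ * α)) - A * (ℰ * α)))
        + ((μ • (E * z) - A * z + Q * (A * z)) - (A * (ℰ * α) - Q * (A * (ℰ * α)))) = 0 := by
      abel
    rw [sub_eq_zero.mpr h2, add_zero] at key
    exact sub_eq_zero.mp key
  have hAv : A * v = μ • (E * z) + Q * (A * v) := by
    have key2 : (A * (ℰ * α) + A * z - (μ • (E * z) + (Q * (A * (ℰ * α)) + Q * (A * z))))
        - (A * z - (μ • (E * z) + Q * (A * z) + Q * (A * (ℰ * α)) - A * (ℰ * α))) = 0 := by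
      abel
    rw [sub_eq_zero.mpr hAz, sub_zero] at key2
    have hsum := sub_eq_zero.mp key2
    rw [hv]
    simp only [Matrix.mul_add]
    exact hsum
  have hEAv : E * (A * v) = A * v := by
    rw [hAv, Matrix.mul_add, Matrix.mul_smul, ← Matrix.mul_assoc E E z, hEidem,
      ← Matrix.mul_assoc E Q, hEQ]
  -- eigen relation
  have hlam : lam • α = ℱᴴ * (A * v) := by
    rw [heig, hv]
    simp only [Matrix.mul_add, Matrix.add_mul]
    rw [hz]
    simp only [Matrix.mul_assoc]
  have hQv : Q * v = E * (ℰ * α) := by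
    rw [hv, Matrix.mul_add, hQz, add_zero, hQℰα]
  have hEv : (E - Q) * v = E * z := by
    rw [hv, Matrix.sub_mul, Matrix.mul_add, Matrix.mul_add, hQℰα, hQz, add_zero]
    abel
  have hQAv : Q * (A * v) = E * (ℰ * (ℱᴴ * (A * v))) := by
    rw [hQ]
    simp only [Matrix.mul_assoc]
    rw [hEAv]
  have hRHS : lam • (Q * v) = E * (ℰ * (ℱᴴ * (A * v))) := by
    rw [hQv, ← hlam, Matrix.mul_smul, Matrix.mul_smul]
  have final : A * v - μ • (E * z) = Q * (A * v) := by
    nth_rewrite 1 [hAv]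
    rw [add_sub_cancel_left]
  rw [Matrix.sub_mul, Matrix.smul_mul, hEv, hRHS, ← hQAv]
  exact final
end

section
/- Suppose A − μE is invertible and let V = (A − μE)⁻¹Eℰ and M = ℱ†EV. If v satisfies [A − μ(E − Q)]v = λQv with v = ℰα + z, ℱ†Ez = 0, λ ≠ μ, then Mα = (λ − μ)⁻¹α, i.e., α is a right eigenvector of M with eigenvalue (λ − μ)⁻¹. -/
open Matrix

/-- α is a right eigenvector of M = ℱᴴEV with eigenvalue (λ − μ)⁻¹. -/
theorem stmt_16 (m n : ℕ) (E A : Matrix (Fin m) (Fin m) ℂ)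
    (hEsym : Eᴴ = E) (hEidem : E * E = E)
    (ℰ ℱ : Matrix (Fin m) (Fin n) ℂ)
    (hnorm : ℱᴴ * E * ℰ = 1)
    (Q : Matrix (Fin m) (Fin m) ℂ)
    (hQ : Q = E * ℰ * ℱᴴ * E)
    (μ lam : ℂ)
    (hAinv : IsUnit (A - μ • E))
    (V : Matrix (Fin m) (Fin n) ℂ)
    (hV : V = (A - μ • E)⁻¹ * E * ℰ)
    (M : Matrix (Fin n) (Fin n) ℂ)
    (hM : M = ℱᴴ * E * V)
    (α : Matrix (Fin n) (Fin 1) ℂ) (z v : Matrix (Fin m) (Fin 1) ℂ)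
    (hv : v = ℰ * α + z) (hz : ℱᴴ * E * z = 0)
    (hne : lam ≠ μ)
    (heq : (A - μ • (E - Q)) * v = lam • (Q * v)) :
    M * α = (lam - μ)⁻¹ • α := by
  have hsub : lam - μ ≠ 0 := sub_ne_zero.mpr hne
  have h1 : ℱᴴ * E * (ℰ * α) = α := by
    rw [← Matrix.mul_assoc, hnorm, Matrix.one_mul]
  have h1' : ℱᴴ * (E * (ℰ * α)) = α := by
    rw [← Matrix.mul_assoc]; exact h1
  have hz' : ℱᴴ * (E * z) = 0 := by rw [← Matrix.mul_assoc]; exact hz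
  have hQv : Q * v = E * (ℰ * α) := by
    rw [hQ, hv]
    simp only [Matrix.mul_add, Matrix.mul_assoc, h1', hz', Matrix.mul_zero, add_zero]
  have hkey : (A - μ • E) * v = (lam - μ) • (E * (ℰ * α)) := by
    have h := heq
    simp only [Matrix.sub_mul, Matrix.smul_mul, smul_sub, hQv, sub_smul] at h ⊢
    rw [eq_sub_iff_add_eq, sub_add]
    exact h
  have hu : IsUnit (A - μ • E).det := (Matrix.isUnit_iff_isUnit_det _).mp hAinv
  have hinv : (A - μ • E)⁻¹ * (A - μ • E) = 1 := Matrix.nonsing_inv_mul _ hu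
  have hvV : v = (lam - μ) • (V * α) := by
    calc v = (A - μ • E)⁻¹ * ((A - μ • E) * v) := by
          rw [← Matrix.mul_assoc, hinv, Matrix.one_mul]
      _ = (lam - μ) • ((A - μ • E)⁻¹ * (E * (ℰ * α))) := by
          rw [hkey, Matrix.mul_smul]
      _ = (lam - μ) • (V * α) := by rw [hV]; simp only [Matrix.mul_assoc]
  have hFEv : ℱᴴ * E * v = α := by
    rw [hv, Matrix.mul_add, h1, hz, add_zero]
  have hα : α = (lam - μ) • (M * α) := by
    conv_lhs => rw [← hFEv, hvV]
    rw [Matrix.mul_smul, hM]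
    simp only [Matrix.mul_assoc]
  have h2 := congrArg (fun x => (lam - μ)⁻¹ • x) hα
  simp only [smul_smul, inv_mul_cancel₀ hsub, one_smul] at h2
  exact h2.symm
end

section
/- Let V̄ = [A − μ(E − Q)]⁻¹Eℰ, V = (A − μE)⁻¹Eℰ, M = ℱ†EV, and 𝒩⁻¹ = ℱ†E V̄, with Q = Eℰℱ†E and ℱ†Eℰ = Iₙ. Assuming the relevant inverses exist, 𝒩 = M⁻¹ + μIₙ. -/
open Matrix

/-- 𝒩 = M⁻¹ + μ Iₙ, where 𝒩⁻¹ = ℱᴴE V̄ and M = ℱᴴE V. -/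
theorem stmt_17 (m n : ℕ) (E A : Matrix (Fin m) (Fin m) ℂ)
    (hEsym : Eᴴ = E) (hEidem : E * E = E)
    (ℰ ℱ : Matrix (Fin m) (Fin n) ℂ)
    (hnorm : ℱᴴ * E * ℰ = 1)
    (Q : Matrix (Fin m) (Fin m) ℂ)
    (hQ : Q = E * ℰ * ℱᴴ * E)
    (μ : ℂ)
    (hAinv : IsUnit (A - μ • E))
    (hAQinv : IsUnit (A - μ • (E - Q)))
    (V Vbar : Matrix (Fin m) (Fin n) ℂ)
    (hV : V = (A - μ • E)⁻¹ * E * ℰ)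
    (hVbar : Vbar = (A - μ • (E - Q))⁻¹ * E * ℰ)
    (M : Matrix (Fin n) (Fin n) ℂ)
    (hM : M = ℱᴴ * E * V)
    (hMinv : IsUnit M) :
    (ℱᴴ * E * Vbar)⁻¹ = M⁻¹ + μ • (1 : Matrix (Fin n) (Fin n) ℂ) := by
  set B := A - μ • E with hB
  set C := A - μ • (E - Q) with hC
  set N := ℱᴴ * E * Vbar with hN
  have hBdet : IsUnit B.det := (Matrix.isUnit_iff_isUnit_det B).mp hAinv
  have hCdet : IsUnit C.det := (Matrix.isUnit_iff_isUnit_det C).mp hAQinv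
  have hMdet : IsUnit M.det := (Matrix.isUnit_iff_isUnit_det M).mp hMinv
  -- B * V = E * ℰ
  have hBV : B * V = E * ℰ := by
    rw [hV, ← Matrix.mul_assoc, ← Matrix.mul_assoc, Matrix.mul_nonsing_inv _ hBdet,
      Matrix.one_mul]
  -- C * Vbar = E * ℰ
  have hCV : C * Vbar = E * ℰ := by
    rw [hVbar, ← Matrix.mul_assoc, ← Matrix.mul_assoc, Matrix.mul_nonsing_inv _ hCdet,
      Matrix.one_mul]
  -- B * Vbar = E * ℰ * (1 - μ • N)
  have hBVbar : B * Vbar = E * ℰ * (1 - μ • N) := by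
    have hCB : C = B + μ • Q := by rw [hC, hB, smul_sub]; abel
    have key : B * Vbar + μ • (Q * Vbar) = E * ℰ := by
      rw [← Matrix.smul_mul, ← Matrix.add_mul, ← hCB]; exact hCV
    have hQV : Q * Vbar = E * ℰ * N := by
      rw [hQ, hN]; simp only [Matrix.mul_assoc]
    rw [hQV] at key
    rw [Matrix.mul_sub, Matrix.mul_one, Matrix.mul_smul]
    exact eq_sub_of_add_eq key
  -- Vbar = V * (1 - μ • N)
  have hVbarV : Vbar = V * (1 - μ • N) := by
    have h1 : Vbar = B⁻¹ * (E * ℰ * (1 - μ • N)) := by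
      rw [← hBVbar, ← Matrix.mul_assoc, Matrix.nonsing_inv_mul _ hBdet, Matrix.one_mul]
    rw [h1, hV]; simp only [Matrix.mul_assoc]
  -- N = M * (1 - μ • N)
  have hNM : N = M * (1 - μ • N) := by
    rw [hM]
    conv_lhs => rw [hN, hVbarV]
    simp only [Matrix.mul_assoc]
  -- (M⁻¹ + μ • 1) * N = 1
  have hleft : (M⁻¹ + μ • (1 : Matrix (Fin n) (Fin n) ℂ)) * N = 1 := by
    have h2 : M⁻¹ * N = 1 - μ • N := by
      calc M⁻¹ * N = M⁻¹ * (M * (1 - μ • N)) := by rw [← hNM]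
        _ = (M⁻¹ * M) * (1 - μ • N) := by rw [Matrix.mul_assoc]
        _ = 1 - μ • N := by rw [Matrix.nonsing_inv_mul _ hMdet, Matrix.one_mul]
    rw [add_mul, h2, smul_mul_assoc, Matrix.one_mul]
    abel
  exact Matrix.inv_eq_left_inv hleft
end

section
/- Let 𝒩 = (ℱ†E[A − λ(E − Q)]⁻¹Eℰ)⁻¹, A_rr = ℱ†Aℰ, and H(λ) = ℱ†AP(λE − A + [A,Q]₊)⁻¹PAℰ, where Q = Eℰℱ†E, P = Iₘ − Q and ℱ†Eℰ = Iₙ. Then 𝒩 = A_rr + H(λ), assuming all inverses exist. -/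
open Matrix

/-- 𝒩 = A_rr + H(λ). -/
theorem stmt_18 (m n : ℕ) (E A : Matrix (Fin m) (Fin m) ℂ)
    (hEsym : Eᴴ = E) (hEidem : E * E = E)
    (ℰ ℱ : Matrix (Fin m) (Fin n) ℂ)
    (hnorm : ℱᴴ * E * ℰ = 1)
    (Q P : Matrix (Fin m) (Fin m) ℂ)
    (hQ : Q = E * ℰ * ℱᴴ * E) (hP : P = 1 - Q)
    (lam : ℂ)
    (hAQinv : IsUnit (A - lam • (E - Q)))
    (hNinv : IsUnit (lam • E - A + (A * Q + Q * A)))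
    (hMinv : IsUnit (ℱᴴ * E * ((A - lam • (E - Q))⁻¹ * E * ℰ))) :
    (ℱᴴ * E * ((A - lam • (E - Q))⁻¹ * E * ℰ))⁻¹ =
      ℱᴴ * A * ℰ +
        ℱᴴ * A * P * (lam • E - A + (A * Q + Q * A))⁻¹ * P * A * ℰ := by
  set M : Matrix (Fin m) (Fin m) ℂ := A - lam • (E - Q) with hMdef
  set N : Matrix (Fin m) (Fin m) ℂ := lam • E - A + (A * Q + Q * A) with hNdef
  set B : Matrix (Fin m) (Fin m) ℂ := M⁻¹ with hBdef
  set G : Matrix (Fin m) (Fin m) ℂ := N⁻¹ with hGdef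
  have hBM : B * M = 1 := Matrix.nonsing_inv_mul M ((Matrix.isUnit_iff_isUnit_det M).mp hAQinv)
  have hNG : N * G = 1 := Matrix.mul_nonsing_inv N ((Matrix.isUnit_iff_isUnit_det N).mp hNinv)
  have hGN : G * N = 1 := Matrix.nonsing_inv_mul N ((Matrix.isUnit_iff_isUnit_det N).mp hNinv)
  -- basic right-assoc helper lemmas
  have hE2 : ∀ {k : ℕ} (X : Matrix (Fin m) (Fin k) ℂ), E * (E * X) = E * X := by
    intro k X; rw [← Matrix.mul_assoc, hEidem]
  have hFE : ∀ {k : ℕ} (X : Matrix (Fin n) (Fin k) ℂ), ℱᴴ * (E * (ℰ * X)) = X := by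
    intro k X; rw [← Matrix.mul_assoc, ← Matrix.mul_assoc, hnorm, Matrix.one_mul]
  have hFEℰ1 : ℱᴴ * (E * ℰ) = 1 := by rw [← Matrix.mul_assoc, hnorm]
  -- Q relations
  have hEQ : E * Q = Q := by
    rw [hQ, ← Matrix.mul_assoc, ← Matrix.mul_assoc, ← Matrix.mul_assoc, hEidem]
  have hQE : Q * E = Q := by rw [hQ, Matrix.mul_assoc, hEidem]
  have hQQ : Q * Q = Q := by
    rw [hQ]; simp only [Matrix.mul_assoc]; rw [hE2, hFE]
  have hQEℰ : Q * (E * ℰ) = E * ℰ := by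
    rw [hQ]; simp only [Matrix.mul_assoc]; rw [hE2, hFEℰ1, Matrix.mul_one]
  have hQℰ : Q * ℰ = E * ℰ := by
    rw [hQ]; simp only [Matrix.mul_assoc]; rw [hFEℰ1, Matrix.mul_one]
  have hFEQ : ℱᴴ * E * Q = ℱᴴ * E := by
    rw [hQ]; simp only [Matrix.mul_assoc]; rw [hE2, hFE]
  -- P relations
  have hQP : Q * P = 0 := by rw [hP, mul_sub, mul_one, hQQ, sub_self]
  have hPP : P * P = P := by
    rw [hP, sub_mul, one_mul, mul_sub, mul_one, hQQ, sub_self, sub_zero]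
  have hQPsum : Q + P = 1 := by rw [hP, add_sub_cancel]
  have hPEℰ : P * (E * ℰ) = 0 := by rw [hP, Matrix.sub_mul, Matrix.one_mul, hQEℰ, sub_self]
  have hFEP : ℱᴴ * E * P = 0 := by rw [hP, Matrix.mul_sub, Matrix.mul_one, hFEQ, sub_self]
  have hQEQ0 : Q * (E - Q) = 0 := by rw [mul_sub, hQE, hQQ, sub_self]
  have hPEQ : P * (E - Q) = E - Q := by rw [hP, sub_mul, one_mul, hQEQ0, sub_zero]
  have hEQP : (E - Q) * P = E - Q := by
    rw [hP, mul_sub, mul_one, sub_mul, hEQ, hQQ]; abel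
  -- M relations
  have hQM : Q * M = Q * A := by rw [hMdef, mul_sub, mul_smul_comm, hQEQ0, smul_zero, sub_zero]
  have hPM : P * M = P * A - lam • (E - Q) := by rw [hMdef, mul_sub, mul_smul_comm, hPEQ]
  have h1EEQ : (1 - E) * (E - Q) = 0 := by
    rw [sub_mul, one_mul, mul_sub, hEidem, hEQ, sub_self]
  have h1EM : (1 - E) * M = (1 - E) * A := by
    rw [hMdef, mul_sub, mul_smul_comm, h1EEQ, smul_zero, sub_zero]
  -- N relations
  have hNQ : N * Q = lam • Q + Q * (A * Q) := by
    rw [hNdef, add_mul, sub_mul, add_mul, smul_mul_assoc, hEQ, mul_assoc A Q Q, hQQ,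
      mul_assoc Q A Q]
    abel
  have hQN : Q * N = lam • Q + Q * (A * Q) := by
    rw [hNdef, mul_add, mul_sub, mul_add, mul_smul_comm, hQE, ← mul_assoc Q Q A, hQQ]
    abel
  have hQNc : Q * N = N * Q := by rw [hQN, hNQ]
  have hGQ : G * Q = Q * G :=
    calc G * Q = G * Q * (N * G) := by rw [hNG, mul_one]
      _ = G * (Q * N) * G := by simp only [Matrix.mul_assoc]
      _ = G * (N * Q) * G := by rw [hQNc]
      _ = (G * N) * (Q * G) := by simp only [Matrix.mul_assoc]
      _ = Q * G := by rw [hGN, one_mul]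
  have hGP : G * P = P * G := by rw [hP, mul_sub, sub_mul, mul_one, one_mul, hGQ]
  have hPAP : P * (A * P) = A - A * Q - Q * A + Q * (A * Q) := by
    rw [hP, mul_sub A 1 Q, mul_one, sub_mul, one_mul, mul_sub Q A (A * Q),
      ← mul_assoc Q A Q]
    abel
  have hKey : N * P + P * (A * P) = lam • (E - Q) := by
    have hNP : N * P = N - (lam • Q + Q * (A * Q)) := by rw [hP, mul_sub, mul_one, hNQ]
    rw [hNP, hPAP, hNdef, smul_sub]
    abel
  -- the central auxiliary matrix u
  set X0 : Matrix (Fin m) (Fin n) ℂ := P * (A * (E * ℰ)) with hX0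
  set u : Matrix (Fin m) (Fin n) ℂ := E * ℰ + P * (G * X0) with hu
  have hNGPX : ∀ (Y : Matrix (Fin m) (Fin n) ℂ), N * (P * (G * Y)) = P * Y := by
    intro Y
    rw [← Matrix.mul_assoc P G Y, ← hGP, Matrix.mul_assoc G P Y, ← Matrix.mul_assoc N G _,
      hNG, Matrix.one_mul]
  have hPX0 : P * X0 = X0 := by rw [hX0, ← Matrix.mul_assoc, hPP]
  have hEQu : (E - Q) * u = (E - Q) * (G * X0) := by
    rw [hu, Matrix.mul_add, ← Matrix.mul_assoc (E - Q) P (G * X0), hEQP, Matrix.sub_mul,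
      hQEℰ, hE2, sub_self, zero_add]
  have hsmulEQ : (lam • (E - Q)) * (G * X0) = X0 + P * (A * (P * (G * X0))) := by
    rw [← hKey, Matrix.add_mul]
    have t1 : N * P * (G * X0) = X0 := by
      rw [Matrix.mul_assoc N P (G * X0), hNGPX, hPX0]
    have t2 : P * (A * P) * (G * X0) = P * (A * (P * (G * X0))) := by
      simp only [Matrix.mul_assoc]
    rw [t1, t2]
  have hPMu : P * (M * u) = 0 := by
    rw [← Matrix.mul_assoc, hPM, Matrix.sub_mul, Matrix.smul_mul, hEQu, ← Matrix.smul_mul,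
      hsmulEQ]
    rw [hu, Matrix.mul_add, Matrix.mul_assoc P A (E * ℰ), ← hX0]
    simp only [Matrix.mul_assoc]
    abel
  have hMu : M * u = Q * (A * u) := by
    have h1 : M * u = Q * (M * u) + P * (M * u) := by
      conv_lhs => rw [← Matrix.one_mul (M * u), ← hQPsum, Matrix.add_mul]
    rw [h1, hPMu, add_zero, ← Matrix.mul_assoc, hQM, Matrix.mul_assoc]
  have hBu : u = B * (Q * (A * u)) := by rw [← hMu, ← Matrix.mul_assoc, hBM, Matrix.one_mul]
  have hu1 : ℱᴴ * E * u = 1 := by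
    rw [hu, Matrix.mul_add, ← Matrix.mul_assoc (ℱᴴ * E) P (G * X0), hFEP, Matrix.zero_mul,
      add_zero, Matrix.mul_assoc, hE2, hFEℰ1]
  have main1 : (1 : Matrix (Fin n) (Fin n) ℂ) =
      (ℱᴴ * E * (B * E * ℰ)) * (ℱᴴ * E * (A * u)) := by
    rw [← hu1]
    conv_lhs => rw [hBu]
    rw [hQ]
    simp only [Matrix.mul_assoc]
  -- identification of ℱᴴ * E * (A * u) with the stated right-hand side
  set v : Matrix (Fin m) (Fin n) ℂ := ℰ - E * ℰ with hv
  have hEv : E * v = 0 := by rw [hv, Matrix.mul_sub, hE2, sub_self]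
  have hQv : Q * v = 0 := by rw [hv, Matrix.mul_sub, hQℰ, hQEℰ, sub_self]
  have hPv : P * v = v := by rw [hP, Matrix.sub_mul, Matrix.one_mul, hQv, sub_zero]
  have hNv : N * v = -(P * (A * v)) := by
    have hPAv' : P * (A * v) = A * v - Q * (A * v) := by
      rw [hP, Matrix.sub_mul, Matrix.one_mul]
    rw [hNdef, Matrix.add_mul, Matrix.sub_mul, Matrix.smul_mul, hEv, smul_zero, Matrix.add_mul,
      Matrix.mul_assoc A Q v, hQv, Matrix.mul_zero, Matrix.mul_assoc Q A v, hPAv']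
    abel
  have hPAv : P * (A * v) = -(N * v) := by rw [hNv, neg_neg]
  have hPGPAv : P * (G * (P * (A * v))) = -v := by
    rw [hPAv, Matrix.mul_neg, Matrix.mul_neg, ← Matrix.mul_assoc G N v, hGN, Matrix.one_mul,
      hPv]
  have huu : u = ℰ + P * (G * (P * (A * ℰ))) := by
    have hexp : P * (G * (P * (A * ℰ))) = P * (G * X0) + P * (G * (P * (A * v))) := by
      rw [hX0, hv, Matrix.mul_sub A ℰ (E * ℰ), Matrix.mul_sub P (A * ℰ) (A * (E * ℰ)),
        Matrix.mul_sub G _ _, Matrix.mul_sub P _ _]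
      abel
    rw [hexp, hPGPAv, hu, hv]
    abel
  have hEAu : E * (A * u) = A * u := by
    have h0 : (1 - E) * (A * u) = 0 := by
      rw [← Matrix.mul_assoc, ← h1EM, Matrix.mul_assoc, hMu, ← Matrix.mul_assoc,
        Matrix.sub_mul, Matrix.one_mul, hEQ, sub_self, Matrix.zero_mul]
    have h1 : A * u - E * (A * u) = 0 := by
      rw [← h0, Matrix.sub_mul, Matrix.one_mul]
    rw [← sub_eq_zero]
    rw [← neg_eq_zero, neg_sub]
    exact h1
  have hRHS : ℱᴴ * A * ℰ + ℱᴴ * A * P * G * P * A * ℰ = ℱᴴ * E * (A * u) := by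
    rw [Matrix.mul_assoc (ℱᴴ) E (A * u), hEAu, huu, Matrix.mul_add A, Matrix.mul_add ℱᴴ]
    simp only [Matrix.mul_assoc]
  rw [← hRHS] at main1
  exact Matrix.inv_eq_right_inv main1.symm
end
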